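/- The minimum operation on norms is jointly 1-Lipschitz for d_1: for norms χ_1, χ_2, χ'_1, χ'_2 on a finite-dimensional vector space V, one has d_1(χ_1∧χ_2, χ'_1∧χ'_2) ≤ d_1(χ_1,χ'_1) + d_1(χ_2,χ'_2). -/

import Mathlib

/-!
Any two norms have a joint orthogonal basis: take `v` maximising the first norm and a complement
of `k ∙ v` containing the vectors on which the second norm exceeds its value at `v`, and induct.
In an orthogonal basis of `χ`, the number of basis vectors with `χ eᵢ ≥ r` is the dimension of
the filtration step `Fʳχ = {χ ≥ r}`; hence the spectrum, and with it `vol`, is independent of the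
basis, and `d₁(χ, χ') = vol χ + vol χ' - 2 vol (χ ∧ χ')`. As `Fʳ(χ ∧ χ') = Fʳχ ∩ Fʳχ'`, the
inequality reduces, level by level, to the dimension inequality
`dim(A∩B) + dim(A'∩B') + 2 dim(A∩A') + 2 dim(B∩B')`
`  ≤ dim A + dim A' + dim B + dim B' + 2 dim(A∩B∩A'∩B')`,
which follows from the modular law. Levels may be compared one at a time because a multiset of
reals whose counts `#{x ≥ r}` are dominated by those of another of the same size has smaller sum.
-/
open scoped ENNReal

noncomputable section
attribute [local instance] Classical.propDecidable

/-- An additive non-Archimedean norm on a vector space over a trivially valued field: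
`χ : V → ℝ ∪ {+∞}` with `χ v = +∞` iff `v = 0`, invariance under nonzero scalars, and
the ultrametric inequality `χ(v+w) ≥ min (χ v) (χ w)`. -/
structure NAnorm (k V : Type*) [Field k] [AddCommGroup V] [Module k V] where
  toFun : V → EReal
  ne_bot : ∀ v, toFun v ≠ ⊥
  top_iff : ∀ v, toFun v = ⊤ ↔ v = 0
  smul_eq : ∀ (a : k) (v : V), a ≠ 0 → toFun (a • v) = toFun v
  ultra : ∀ v w, min (toFun v) (toFun w) ≤ toFun (v + w)

namespace NAnorm

variable {k V : Type*} [Field k] [AddCommGroup V] [Module k V]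

/-- A basis is `χ`-orthogonal if the norm of any linear combination is the minimum of the
norms of the basis vectors appearing with a nonzero coefficient. -/
def IsOrthogonal {N : ℕ} (χ : NAnorm k V) (b : Module.Basis (Fin N) k V) : Prop :=
  ∀ a : Fin N → k, χ.toFun (∑ i, a i • b i) = ⨅ i ∈ {i | a i ≠ 0}, χ.toFun (b i)

/-- The real value of the norm (finite on nonzero vectors). -/
noncomputable def val (χ : NAnorm k V) (v : V) : ℝ := (χ.toFun v).toReal

/-- The pointwise minimum of two norms. -/
noncomputable def inf (χ χ' : NAnorm k V) : NAnorm k V where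
  toFun v := min (χ.toFun v) (χ'.toFun v)
  ne_bot v h := by
    rcases min_cases (χ.toFun v) (χ'.toFun v) with ⟨h1, _⟩ | ⟨h1, _⟩
    · exact χ.ne_bot v (by rw [← h1]; exact h)
    · exact χ'.ne_bot v (by rw [← h1]; exact h)
  top_iff v := by
    constructor
    · intro h
      have h1 : (⊤ : EReal) ≤ χ.toFun v := by rw [← h]; exact min_le_left _ _
      exact (χ.top_iff v).1 (le_antisymm le_top h1)
    · intro h
      show min (χ.toFun v) (χ'.toFun v) = ⊤
      rw [(χ.top_iff v).2 h, (χ'.top_iff v).2 h, min_self]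
  smul_eq a v ha := by
    show min (χ.toFun (a • v)) (χ'.toFun (a • v)) = min (χ.toFun v) (χ'.toFun v)
    rw [χ.smul_eq a v ha, χ'.smul_eq a v ha]
  ultra v w := by
    refine le_min ?_ ?_
    · exact le_trans (min_le_min (min_le_left _ _) (min_le_left _ _)) (χ.ultra v w)
    · exact le_trans (min_le_min (min_le_right _ _) (min_le_right _ _)) (χ'.ultra v w)

/-- The Goldman–Iwahori distance `d_∞(χ,χ') = sup_{v ≠ 0} |χ(v) - χ'(v)|`. -/
noncomputable def dInfty (χ χ' : NAnorm k V) : ℝ≥0∞ :=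
  ⨆ v : {v : V // v ≠ 0}, ENNReal.ofReal |χ.val v.1 - χ'.val v.1|

/-- The distance `d_p(χ,χ')`, computed from the relative spectrum of `χ,χ'` in a joint
orthogonal basis. -/
noncomputable def dp (p : ℝ) (χ χ' : NAnorm k V) : ℝ :=
  if h : ∃ b : Module.Basis (Fin (Module.finrank k V)) k V, χ.IsOrthogonal b ∧ χ'.IsOrthogonal b then
    ((Module.finrank k V : ℝ)⁻¹ *
      ∑ j, |χ.val (h.choose j) - χ'.val (h.choose j)| ^ p) ^ (1 / p)
  else 0

/-- The volume of a norm: the mean of its spectrum, computed in an orthogonal basis. -/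
noncomputable def vol (χ : NAnorm k V) : ℝ :=
  if h : ∃ b : Module.Basis (Fin (Module.finrank k V)) k V, χ.IsOrthogonal b then
    (Module.finrank k V : ℝ)⁻¹ * ∑ j, χ.val (h.choose j)
  else 0

end NAnorm

open Module

theorem Multiset.sum_le_sum_of_card_filter_le {α : Type*} [AddCommMonoid α] [LinearOrder α]
    [IsOrderedAddMonoid α] {s t : Multiset α} (hcard : Multiset.card s = Multiset.card t)
    (hcount : ∀ r, Multiset.card (s.filter (r ≤ ·)) ≤ Multiset.card (t.filter (r ≤ ·))) :
    s.sum ≤ t.sum := by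
  obtain ⟨n, hn⟩ : ∃ n, Multiset.card s = n := ⟨_, rfl⟩
  induction n generalizing s t with
  | zero => rw [Multiset.card_eq_zero.1 hn, Multiset.card_eq_zero.1 (hcard.symm.trans hn)]
  | succ n ih =>
    obtain ⟨m, hm, hm_max⟩ := Multiset.exists_max_image id (s := s) (by rintro rfl; simp at hn)
    obtain ⟨a, ha, ha_max⟩ := Multiset.exists_max_image id (s := t) (by rintro rfl; simp_all)
    have hma : m ≤ a := by
      obtain ⟨x, hx⟩ := Multiset.card_pos_iff_exists_mem.1 <| (hcount m).trans_lt' <|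
        Multiset.card_pos_iff_exists_mem.2 ⟨m, Multiset.mem_filter.2 ⟨hm, le_rfl⟩⟩
      exact (Multiset.mem_filter.1 hx).2.trans (ha_max x (Multiset.mem_filter.1 hx).1)
    rw [← Multiset.cons_erase hm, ← Multiset.cons_erase ha] at hcount hcard ⊢
    rw [Multiset.sum_cons, Multiset.sum_cons]
    refine add_le_add hma (ih (by simpa using hcard) (fun r => ?_)
      (by simp [Multiset.card_erase_of_mem hm, hn]))
    by_cases hr : r ≤ m
    · simpa [Multiset.filter_cons, hr, hr.trans hma] using hcount r
    · rw [Multiset.card_eq_zero.2 (Multiset.filter_eq_nil.2 fun x hx hrx =>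
        hr (hrx.trans (hm_max x (Multiset.mem_of_mem_erase hx))))]
      exact Nat.zero_le _

theorem iInf_fin_succ {α : Type*} [CompleteLattice α] {n : ℕ} (f : Fin (n + 1) → α) :
    ⨅ i, f i = f 0 ⊓ ⨅ j : Fin n, f j.succ := by
  rw [← (finSuccEquiv n).symm.iInf_comp, iInf_option]
  simp

namespace NAnorm

variable {k V : Type*} [Field k] [AddCommGroup V] [Module k V] (χ χ' : NAnorm k V)

theorem toFun_zero : χ.toFun 0 = ⊤ := (χ.top_iff 0).2 rfl

theorem toFun_ne_top {v : V} (hv : v ≠ 0) : χ.toFun v ≠ ⊤ := fun h => hv ((χ.top_iff v).1 h)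

theorem coe_val {v : V} (hv : v ≠ 0) : (χ.val v : EReal) = χ.toFun v :=
  EReal.coe_toReal (χ.toFun_ne_top hv) (χ.ne_bot v)

theorem toFun_neg (v : V) : χ.toFun (-v) = χ.toFun v := by
  simpa using χ.smul_eq (-1) v (neg_ne_zero.2 one_ne_zero)

theorem toFun_add_eq_left_of_lt {v w : V} (h : χ.toFun v < χ.toFun w) :
    χ.toFun (v + w) = χ.toFun v := by
  refine le_antisymm ?_ (by simpa [min_eq_left h.le] using χ.ultra v w)
  have := χ.ultra (v + w) (-w)
  rw [toFun_neg, add_neg_cancel_right] at this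
  exact (min_le_iff.1 this).resolve_right h.not_ge

@[simp]
theorem inf_toFun (v : V) : (χ.inf χ').toFun v = min (χ.toFun v) (χ'.toFun v) := rfl

theorem inf_val {v : V} (hv : v ≠ 0) : (χ.inf χ').val v = min (χ.val v) (χ'.val v) := by
  rw [← EReal.coe_eq_coe_iff, EReal.coe_strictMono.monotone.map_min, coe_val _ hv, coe_val _ hv,
    coe_val _ hv, inf_toFun]

def filtration (t : EReal) : Submodule k V where
  carrier := {v | t ≤ χ.toFun v}
  add_mem' hv hw := (le_min hv hw).trans (χ.ultra _ _)
  zero_mem' := by simp [toFun_zero]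
  smul_mem' a v hv := by
    rcases eq_or_ne a 0 with rfl | ha
    · simp [toFun_zero]
    · simpa [χ.smul_eq a v ha] using hv

@[simp]
theorem mem_filtration {t : EReal} {v : V} : v ∈ χ.filtration t ↔ t ≤ χ.toFun v := Iff.rfl

theorem filtration_inf (t : EReal) :
    (χ.inf χ').filtration t = χ.filtration t ⊓ χ'.filtration t := by
  ext v
  simp

def strictFiltration (t : ℝ) : Submodule k V where
  carrier := {v | t < χ.toFun v}
  add_mem' hv hw := (lt_min hv hw).trans_le (χ.ultra _ _)
  zero_mem' := by simp [toFun_zero]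
  smul_mem' a v hv := by
    rcases eq_or_ne a 0 with rfl | ha
    · simp [toFun_zero]
    · simpa [χ.smul_eq a v ha] using hv

@[simp]
theorem mem_strictFiltration {t : ℝ} {v : V} : v ∈ χ.strictFiltration t ↔ t < χ.toFun v :=
  Iff.rfl

def restrict (W : Submodule k V) : NAnorm k W where
  toFun w := χ.toFun w
  ne_bot w := χ.ne_bot w
  top_iff w := by simp [χ.top_iff]
  smul_eq a w ha := χ.smul_eq a w ha
  ultra v w := χ.ultra v w

theorem exists_forall_toFun_le [FiniteDimensional k V] [Nontrivial V] :
    ∃ v ≠ 0, ∀ u ≠ 0, χ.toFun u ≤ χ.toFun v := by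
  obtain ⟨v₀, hv₀⟩ := exists_ne (0 : V)
  -- a vector whose filtration step `{χ ≥ χ v}` is minimal maximises `χ`
  obtain ⟨_, ⟨⟨v, hv⟩, rfl⟩, hmin⟩ := wellFounded_lt.has_min
    (Set.range fun v : {v : V // v ≠ 0} => χ.filtration (χ.toFun v)) ⟨_, ⟨v₀, hv₀⟩, rfl⟩
  refine ⟨v, hv, fun u hu => not_lt.1 fun hlt => hmin _ ⟨⟨u, hu⟩, rfl⟩ ?_⟩
  refine lt_of_le_of_ne (fun x hx => hlt.le.trans hx) fun h => ?_
  have hv_mem : v ∈ χ.filtration (χ.toFun u) := by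
    rw [show χ.filtration (χ.toFun u) = χ.filtration (χ.toFun v) from h]
    exact (χ.mem_filtration).2 le_rfl
  exact hlt.not_ge hv_mem

theorem toFun_smul_add_of_disjoint {v : V} (hv : v ≠ 0) {W : Submodule k V}
    (hW : Disjoint W (k ∙ v)) (hle : χ.strictFiltration (χ.val v) ≤ W) (a : k) {w : V}
    (hw : w ∈ W) : χ.toFun (a • v + w) = min (χ.toFun (a • v)) (χ.toFun w) := by
  rcases eq_or_ne a 0 with rfl | ha
  · simp [toFun_zero]
  rw [χ.smul_eq a v ha]
  rcases lt_or_ge (χ.toFun w) (χ.toFun v) with hwv | hvw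
  · rw [add_comm, χ.toFun_add_eq_left_of_lt (by rwa [χ.smul_eq a v ha]), min_eq_right hwv.le]
  rw [min_eq_left hvw]
  refine le_antisymm (not_lt.1 fun hlt => ?_)
    (by simpa [χ.smul_eq a v ha, hvw] using χ.ultra (a • v) w)
  have hW_mem : a • v ∈ W := by
    have := W.sub_mem (hle ((χ.mem_strictFiltration).2 (by rwa [coe_val χ hv]))) hw
    rwa [add_sub_cancel_right] at this
  exact smul_ne_zero ha hv <| Submodule.disjoint_def.1 hW _ hW_mem
    (Submodule.smul_mem _ a (Submodule.mem_span_singleton_self v))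

theorem isOrthogonal_of_coe_eq_finCons {n : ℕ} {W : Submodule k V} {v : V}
    {bW : Basis (Fin n) k W} (hbW : (χ.restrict W).IsOrthogonal bW) {b : Basis (Fin (n + 1)) k V}
    (hb : ⇑b = Fin.cons v (Subtype.val ∘ bW))
    (hsplit : ∀ a : k, ∀ w ∈ W, χ.toFun (a • v + w) = min (χ.toFun (a • v)) (χ.toFun w)) :
    χ.IsOrthogonal b := by
  intro a
  have hsum : ∑ i, a i • b i = a 0 • v + ↑(∑ j, a j.succ • bW j) := by
    simp [Fin.sum_univ_succ, hb]
  have h0 : χ.toFun (a 0 • v) = ⨅ _ : a 0 ≠ 0, χ.toFun v := by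
    rcases eq_or_ne (a 0) 0 with h | h
    · simp [h, toFun_zero]
    · simp [h, χ.smul_eq _ _ h]
  rw [hsum, hsplit _ _ (Submodule.coe_mem _), h0, show χ.toFun ↑(∑ j, a j.succ • bW j) = _ from
    hbW fun j => a j.succ]
  rw [iInf_fin_succ fun i => ⨅ _ : i ∈ {i | a i ≠ 0}, χ.toFun (b i)]
  simp [hb, restrict]

theorem exists_basis_coe_eq_finCons {n : ℕ} {W : Submodule k V} {v : V} (hv : v ≠ 0)
    (hW : IsCompl W (k ∙ v)) (bW : Basis (Fin n) k W) :
    ∃ b : Basis (Fin (n + 1)) k V, ⇑b = Fin.cons v (Subtype.val ∘ bW) := by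
  refine ⟨Basis.mkFinCons v bW (fun c x hx hcx => ?_) (fun z => ?_), Basis.coe_mkFinCons ..⟩
  · have hcv : c • v ∈ W := by simpa [eq_neg_of_add_eq_zero_left hcx] using W.neg_mem hx
    exact (smul_eq_zero.1 <| Submodule.disjoint_def.1 hW.disjoint _ hcv
      (Submodule.smul_mem _ c (Submodule.mem_span_singleton_self v))).resolve_right hv
  · obtain ⟨w, hw, y, hy, rfl⟩ :=
      Submodule.mem_sup.1 (hW.sup_eq_top ▸ Submodule.mem_top : z ∈ W ⊔ (k ∙ v))
    obtain ⟨c, rfl⟩ := Submodule.mem_span_singleton.1 hy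
    exact ⟨-c, by simpa using hw⟩

theorem exists_isOrthogonal_isOrthogonal_of_finrank_eq [FiniteDimensional k V] {n : ℕ}
    (hn : finrank k V = n) :
    ∃ b : Basis (Fin n) k V, χ.IsOrthogonal b ∧ χ'.IsOrthogonal b := by
  induction n generalizing V with
  | zero =>
    refine ⟨Module.finBasisOfFinrankEq k V hn, ?_, ?_⟩ <;> simp [IsOrthogonal, toFun_zero]
  | succ n ih =>
    have : Nontrivial V := Module.nontrivial_of_finrank_eq_succ hn
    obtain ⟨v, hv, hv_max⟩ := χ.exists_forall_toFun_le
    have hv_mem : v ∉ χ'.strictFiltration (χ'.val v) := by simp [coe_val χ' hv]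
    -- `W` must contain the vectors on which `χ'` exceeds `χ' v`; for `χ` this is automatic
    obtain ⟨W, hW_le, hW⟩ := ((Submodule.disjoint_span_singleton' hv).2 hv_mem).exists_isCompl
    have hχ_le : χ.strictFiltration (χ.val v) ≤ W := fun u hu => by
      by_cases hu0 : u = 0
      · exact hu0 ▸ W.zero_mem
      · exact absurd (hv_max u hu0) (by simpa [coe_val χ hv] using hu)
    have hW_rank : finrank k W = n := by
      have := Submodule.finrank_add_eq_of_isCompl hW
      rw [finrank_span_singleton hv, hn] at this
      omega
    obtain ⟨bW, hbW, hbW'⟩ := ih (χ.restrict W) (χ'.restrict W) hW_rank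
    obtain ⟨b, hb⟩ := exists_basis_coe_eq_finCons hv hW bW
    have hsplit := χ.toFun_smul_add_of_disjoint hv hW.disjoint hχ_le
    have hsplit' := χ'.toFun_smul_add_of_disjoint hv hW.disjoint hW_le
    exact ⟨b, χ.isOrthogonal_of_coe_eq_finCons hbW hb hsplit,
      χ'.isOrthogonal_of_coe_eq_finCons hbW' hb hsplit'⟩

theorem exists_isOrthogonal_isOrthogonal [FiniteDimensional k V] :
    ∃ b : Basis (Fin (finrank k V)) k V, χ.IsOrthogonal b ∧ χ'.IsOrthogonal b :=
  exists_isOrthogonal_isOrthogonal_of_finrank_eq χ χ' rfl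

section Spectrum

variable {N : ℕ} {b : Basis (Fin N) k V}

def spectrum (b : Basis (Fin N) k V) : Multiset ℝ :=
  Finset.univ.val.map fun i => χ.val (b i)

theorem card_spectrum : Multiset.card (χ.spectrum b) = N := by
  simp [spectrum]

variable {χ χ'}

theorem IsOrthogonal.inf (hb : χ.IsOrthogonal b) (hb' : χ'.IsOrthogonal b) :
    (χ.inf χ').IsOrthogonal b := by
  intro a
  simp only [inf_toFun, hb a, hb' a, ← iInf_inf_eq]

theorem IsOrthogonal.filtration_eq_span (hb : χ.IsOrthogonal b) (t : EReal) :
    χ.filtration t = Submodule.span k (b '' {i | t ≤ χ.toFun (b i)}) := by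
  ext v
  have hv : χ.toFun v = ⨅ i ∈ {i | b.repr v i ≠ 0}, χ.toFun (b i) := by
    conv_lhs => rw [← b.sum_repr v]
    exact hb _
  simp only [mem_filtration, Basis.mem_span_image, hv, le_iInf₂_iff, Set.subset_def,
    Finset.mem_coe, Finsupp.mem_support_iff]
  rfl

theorem IsOrthogonal.finrank_filtration (hb : χ.IsOrthogonal b) (t : EReal) :
    finrank k (χ.filtration t) = (Finset.univ.filter fun i => t ≤ χ.toFun (b i)).card := by
  rw [hb.filtration_eq_span, Set.image_eq_range, ← Fintype.card_subtype]
  exact finrank_span_eq_card (b.linearIndependent.comp _ Subtype.val_injective)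

theorem IsOrthogonal.card_filter_spectrum (hb : χ.IsOrthogonal b) (r : ℝ) :
    Multiset.card ((χ.spectrum b).filter (r ≤ ·)) = finrank k (χ.filtration r) := by
  have hle i : r ≤ χ.val (b i) ↔ (r : EReal) ≤ χ.toFun (b i) := by
    rw [← coe_val χ (b.ne_zero i), EReal.coe_le_coe_iff]
  simp only [hb.finrank_filtration, spectrum, Multiset.filter_map, Multiset.card_map,
    Function.comp_def, hle]
  rfl

theorem IsOrthogonal.sum_spectrum_eq {c : Basis (Fin N) k V} (hb : χ.IsOrthogonal b)
    (hc : χ.IsOrthogonal c) : (χ.spectrum b).sum = (χ.spectrum c).sum := by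
  have hcard : Multiset.card (χ.spectrum b) = Multiset.card (χ.spectrum c) := by
    rw [card_spectrum, card_spectrum]
  have hcount r : Multiset.card ((χ.spectrum b).filter (r ≤ ·)) =
      Multiset.card ((χ.spectrum c).filter (r ≤ ·)) := by
    rw [hb.card_filter_spectrum, hc.card_filter_spectrum]
  exact le_antisymm (Multiset.sum_le_sum_of_card_filter_le hcard fun r => (hcount r).le)
    (Multiset.sum_le_sum_of_card_filter_le hcard.symm fun r => (hcount r).ge)

theorem IsOrthogonal.vol_eq {b : Basis (Fin (finrank k V)) k V} (hb : χ.IsOrthogonal b) :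
    χ.vol = (finrank k V : ℝ)⁻¹ * (χ.spectrum b).sum := by
  have h : ∃ c : Basis (Fin (finrank k V)) k V, χ.IsOrthogonal c := ⟨b, hb⟩
  rw [vol, dif_pos h, ← h.choose_spec.sum_spectrum_eq hb]
  rfl

end Spectrum

theorem dp_one_eq_vol [FiniteDimensional k V] :
    dp 1 χ χ' = χ.vol + χ'.vol - 2 * (χ.inf χ').vol := by
  have h := exists_isOrthogonal_isOrthogonal χ χ'
  obtain ⟨hb, hb'⟩ := h.choose_spec
  rw [dp, dif_pos h, hb.vol_eq, hb'.vol_eq, (hb.inf hb').vol_eq]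
  simp only [spectrum, ← Finset.sum_eq_multiset_sum, Real.rpow_one, div_one]
  have habs (x y : ℝ) : |x - y| = x + y - 2 * min x y := by
    linarith [min_add_max x y, max_sub_min_eq_abs' x y]
  simp only [habs, fun i => inf_val χ χ' (h.choose.ne_zero i), Finset.sum_sub_distrib,
    Finset.sum_add_distrib, ← Finset.mul_sum]
  ring

theorem sum_vol_le_sum_vol [FiniteDimensional k V] {L L' : Multiset (NAnorm k V)}
    (hcard : Multiset.card L = Multiset.card L')
    (hfinrank : ∀ r : ℝ, (L.map fun χ => finrank k (χ.filtration r)).sum ≤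
      (L'.map fun χ => finrank k (χ.filtration r)).sum) :
    (L.map vol).sum ≤ (L'.map vol).sum := by
  choose b hb using fun χ : NAnorm k V => exists_isOrthogonal_isOrthogonal χ χ
  have hspec : (L.bind fun χ => χ.spectrum (b χ)).sum ≤ (L'.bind fun χ => χ.spectrum (b χ)).sum :=
    Multiset.sum_le_sum_of_card_filter_le (by simp [card_spectrum, hcard])
      fun r => by simpa [Multiset.filter_bind, Function.comp_def, (hb _).1.card_filter_spectrum]
        using hfinrank r
  simp only [Multiset.sum_bind] at hspec
  simp only [fun χ => (hb χ).1.vol_eq, Multiset.sum_map_mul_left]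
  gcongr

section FourSubspaces

variable [FiniteDimensional k V]

theorem finrank_inf_add_finrank_inf_le (X T Y : Submodule k V) :
    finrank k ↥(X ⊓ T) + finrank k ↥(X ⊓ Y) ≤ finrank k X + finrank k ↥(X ⊓ T ⊓ Y) := by
  have hsup : finrank k ↥(X ⊓ T ⊔ X ⊓ Y) ≤ finrank k X :=
    Submodule.finrank_mono (sup_le inf_le_left inf_le_left)
  have hmod := Submodule.finrank_sup_add_finrank_inf_eq (X ⊓ T) (X ⊓ Y)
  rw [← inf_inf_distrib_left, ← inf_assoc] at hmod
  omega

theorem finrank_inf_add_finrank_inf_add_two_mul_le (A B A' B' : Submodule k V) :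
    finrank k ↥(A ⊓ B) + finrank k ↥(A' ⊓ B') + 2 * finrank k ↥(A ⊓ A') +
        2 * finrank k ↥(B ⊓ B') ≤
      finrank k A + finrank k A' + finrank k B + finrank k B' +
        2 * finrank k ↥(A ⊓ B ⊓ (A' ⊓ B')) := by
  have h₁ := finrank_inf_add_finrank_inf_le A B A'
  have h₂ := finrank_inf_add_finrank_inf_le A' B' A
  have h₃ := finrank_inf_add_finrank_inf_le B B' (A ⊓ A')
  have h₄ := finrank_inf_add_finrank_inf_le B' B (A ⊓ A')
  rw [inf_comm A' A] at h₂
  rw [show B ⊓ (A ⊓ A') = A ⊓ B ⊓ A' by ac_rfl,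
    show B ⊓ B' ⊓ (A ⊓ A') = A ⊓ B ⊓ (A' ⊓ B') by ac_rfl] at h₃
  rw [show B' ⊓ (A ⊓ A') = A' ⊓ B' ⊓ A by ac_rfl,
    show B' ⊓ B ⊓ (A ⊓ A') = A ⊓ B ⊓ (A' ⊓ B') by ac_rfl, inf_comm B' B] at h₄
  omega

end FourSubspaces

theorem vol_inf_inf_add_le [FiniteDimensional k V] (χ₁ χ₂ χ₁' χ₂' : NAnorm k V) :
    (χ₁.inf χ₂).vol + (χ₁'.inf χ₂').vol + 2 * (χ₁.inf χ₁').vol + 2 * (χ₂.inf χ₂').vol ≤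
      χ₁.vol + χ₁'.vol + χ₂.vol + χ₂'.vol + 2 * ((χ₁.inf χ₂).inf (χ₁'.inf χ₂')).vol := by
  have := sum_vol_le_sum_vol
    (L := {χ₁.inf χ₂, χ₁'.inf χ₂', χ₁.inf χ₁', χ₁.inf χ₁', χ₂.inf χ₂', χ₂.inf χ₂'})
    (L' := {χ₁, χ₁', χ₂, χ₂', (χ₁.inf χ₂).inf (χ₁'.inf χ₂'), (χ₁.inf χ₂).inf (χ₁'.inf χ₂')}) rfl
    fun r => by
      have := finrank_inf_add_finrank_inf_add_two_mul_le (χ₁.filtration r) (χ₂.filtration r)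
        (χ₁'.filtration r) (χ₂'.filtration r)
      simp only [Multiset.insert_eq_cons, Multiset.map_cons, Multiset.map_singleton,
        Multiset.sum_cons, Multiset.sum_singleton]
      repeat rw [filtration_inf]
      omega
  simp only [Multiset.insert_eq_cons, Multiset.map_cons, Multiset.map_singleton,
    Multiset.sum_cons, Multiset.sum_singleton] at this
  linarith

end NAnorm

/-- The minimum operation on norms is jointly 1-Lipschitz for `d_1`:
`d_1(χ₁∧χ₂, χ₁'∧χ₂') ≤ d_1(χ₁,χ₁') + d_1(χ₂,χ₂')`. -/
theorem d1_inf_lipschitz {k V : Type*} [Field k] [AddCommGroup V] [Module k V]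
    [FiniteDimensional k V] (χ₁ χ₂ χ₁' χ₂' : NAnorm k V) :
    NAnorm.dp 1 (χ₁.inf χ₂) (χ₁'.inf χ₂') ≤
      NAnorm.dp 1 χ₁ χ₁' + NAnorm.dp 1 χ₂ χ₂' := by
  rw [NAnorm.dp_one_eq_vol, NAnorm.dp_one_eq_vol, NAnorm.dp_one_eq_vol]
  linarith [NAnorm.vol_inf_inf_add_le χ₁ χ₂ χ₁' χ₂']
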